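/- If a sequence of nonnegative reals satisfies a_n − a_{n−1} ≤ ρ_n(a_n + a_{n−1})·Δt + s_n for 2 ≤ n ≤ m, with Δt·ρ_n ≤ 1 − 1/δ₀ for some δ₀ > 1, then a_m ≤ exp(δ₀·Δt·∑_{n=2}^m 2ρ_n)·(a_1 + ∑_{n=2}^m s_n). -/

import Mathlib

lemma cnlf_step (A B S x δ₀ : ℝ) (hB : 0 ≤ B) (hS : 0 ≤ S) (hx : 0 ≤ x)
    (hδ : 1 < δ₀) (hxs : x ≤ 1 - 1/δ₀) (h : A - B ≤ x * (A + B) + S) :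
    A ≤ Real.exp (2 * δ₀ * x) * (B + S) := by
  have hδ0 : 0 < δ₀ := lt_trans one_pos hδ
  have h1 : 1/δ₀ ≤ 1 - x := by linarith
  have h2 : (1:ℝ) ≤ δ₀ * (1 - x) := by
    have := (div_le_iff₀ hδ0).mp (by linarith : 1/δ₀ ≤ 1 - x)
    linarith [this]
  have hpos : 0 < 1 - x := lt_of_lt_of_le (by positivity : (0:ℝ) < 1/δ₀) h1
  have key : A ≤ (1 + 2 * δ₀ * x) * (B + S) := by
    have hA1 : A * (1 - x) ≤ (B + S) * (1 + x) := by nlinarith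
    have hineq : (1 + x) ≤ (1 - x) * (1 + 2 * δ₀ * x) := by nlinarith
    have : A * (1 - x) ≤ (1 + 2 * δ₀ * x) * (B + S) * (1 - x) := by nlinarith
    exact le_of_mul_le_mul_right (by linarith) hpos
  have hexp : 1 + 2 * δ₀ * x ≤ Real.exp (2 * δ₀ * x) := by
    have := Real.add_one_le_exp (2 * δ₀ * x); linarith
  calc A ≤ (1 + 2 * δ₀ * x) * (B + S) := key
    _ ≤ Real.exp (2 * δ₀ * x) * (B + S) := by
        apply mul_le_mul_of_nonneg_right hexp (by linarith)

/-- Abstract recursion underlying the CNLF stability proofs. -/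
theorem cnlf_recursion (a ρ s : ℕ → ℝ) (m : ℕ) (hm : 2 ≤ m) (Δt δ₀ : ℝ)
    (hΔt : 0 < Δt) (hδ₀ : 1 < δ₀)
    (ha : ∀ n, 0 ≤ a n) (hρ : ∀ n, 0 ≤ ρ n) (hs : ∀ n, 0 ≤ s n)
    (hrec : ∀ n, 2 ≤ n → n ≤ m → a n - a (n - 1) ≤ ρ n * (a n + a (n - 1)) * Δt + s n)
    (hsmall : ∀ n, 2 ≤ n → n ≤ m → Δt * ρ n ≤ 1 - 1 / δ₀) :
    a m ≤ Real.exp (δ₀ * Δt * ∑ n ∈ Finset.Icc 2 m, 2 * ρ n) *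
      (a 1 + ∑ n ∈ Finset.Icc 2 m, s n) := by
  revert hrec hsmall
  induction m, hm using Nat.le_induction with
  | base =>
    intro hrec hsmall
    have h1 := hrec 2 le_rfl le_rfl
    have h2 := hsmall 2 le_rfl le_rfl
    have := cnlf_step (a 2) (a 1) (s 2) (Δt * ρ 2) δ₀ (ha 1) (hs 2)
      (mul_nonneg hΔt.le (hρ 2)) hδ₀ h2 (by nlinarith [h1])
    simp only [Finset.Icc_self, Finset.sum_singleton]
    calc a 2 ≤ Real.exp (2 * δ₀ * (Δt * ρ 2)) * (a 1 + s 2) := this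
      _ = Real.exp (δ₀ * Δt * (2 * ρ 2)) * (a 1 + s 2) := by ring_nf
  | succ k hk ih =>
    intro hrec hsmall
    have hrec' : ∀ n, 2 ≤ n → n ≤ k → a n - a (n-1) ≤ ρ n * (a n + a (n-1)) * Δt + s n :=
      fun n h1 h2 => hrec n h1 (le_trans h2 (Nat.le_succ k))
    have hsmall' : ∀ n, 2 ≤ n → n ≤ k → Δt * ρ n ≤ 1 - 1/δ₀ :=
      fun n h1 h2 => hsmall n h1 (le_trans h2 (Nat.le_succ k))
    have IH := ih hrec' hsmall'
    have h1 := hrec (k+1) (by omega) le_rfl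
    have h2 := hsmall (k+1) (by omega) le_rfl
    have hk1 : k + 1 - 1 = k := by omega
    rw [hk1] at h1
    have hstep := cnlf_step (a (k+1)) (a k) (s (k+1)) (Δt * ρ (k+1)) δ₀ (ha k)
      (hs (k+1)) (mul_nonneg hΔt.le (hρ (k+1))) hδ₀ h2 (by nlinarith [h1])
    -- sums
    have hsum1 : ∑ n ∈ Finset.Icc 2 (k+1), 2 * ρ n
        = (∑ n ∈ Finset.Icc 2 k, 2 * ρ n) + 2 * ρ (k+1) := by
      rw [Finset.sum_Icc_succ_top (by omega : 2 ≤ k+1)]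
    have hsum2 : ∑ n ∈ Finset.Icc 2 (k+1), s n
        = (∑ n ∈ Finset.Icc 2 k, s n) + s (k+1) := by
      rw [Finset.sum_Icc_succ_top (by omega : 2 ≤ k+1)]
    set E := Real.exp (δ₀ * Δt * ∑ n ∈ Finset.Icc 2 k, 2 * ρ n) with hE
    have hE1 : 1 ≤ E := by
      rw [hE]
      apply Real.one_le_exp
      have : 0 ≤ ∑ n ∈ Finset.Icc 2 k, 2 * ρ n :=
        Finset.sum_nonneg fun n _ => by have := hρ n; linarith
      positivity
    have hEpos : 0 < E := lt_of_lt_of_le one_pos hE1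
    have hS : 0 ≤ ∑ n ∈ Finset.Icc 2 k, s n := Finset.sum_nonneg fun n _ => hs n
    have hbound : a k + s (k+1) ≤ E * (a 1 + ∑ n ∈ Finset.Icc 2 (k+1), s n) := by
      rw [hsum2]
      have h3 : s (k+1) ≤ E * s (k+1) := le_mul_of_one_le_left (hs (k+1)) hE1
      nlinarith [IH, hs (k+1), ha 1]
    have hfin : a (k+1) ≤ Real.exp (2 * δ₀ * (Δt * ρ (k+1))) * E
        * (a 1 + ∑ n ∈ Finset.Icc 2 (k+1), s n) := by
      calc a (k+1) ≤ Real.exp (2 * δ₀ * (Δt * ρ (k+1))) * (a k + s (k+1)) := hstep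
        _ ≤ Real.exp (2 * δ₀ * (Δt * ρ (k+1)))
            * (E * (a 1 + ∑ n ∈ Finset.Icc 2 (k+1), s n)) := by
            apply mul_le_mul_of_nonneg_left hbound (Real.exp_nonneg _)
        _ = _ := by ring
    have hEeq : Real.exp (2 * δ₀ * (Δt * ρ (k+1))) * E
        = Real.exp (δ₀ * Δt * ∑ n ∈ Finset.Icc 2 (k+1), 2 * ρ n) := by
      rw [hE, ← Real.exp_add, hsum1, mul_add]; congr 1; ring
    rwa [hEeq] at hfin
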